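/- For every w ∈ W̃ and every s̃ ∈ S̃, exactly one of the following two equalities holds: ℓ(s̃ w) = ℓ(w) + ℓ(s̃) or ℓ(s̃ w) = ℓ(w) − ℓ(s̃). -/

import Mathlib

/-!
Relative Coxeter groups: common definitions.

`(W, S)` is a Coxeter system (Mathlib's `CoxeterSystem M W`), `ℓ = cs.length`.
For `w : W`, `invSet cs w` is the set `T(w)` of left inversions of `w`, and
`descSet cs w = T(w) ∩ S` is `D(w)`.  For a subset `Sg ⊆ S` (playing the role of `Σ`),
`par Sg` is the standard parabolic subgroup `W_Σ`, `parRefl Sg` its set of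
reflections `T_Σ`, `minRight cs Sg = W^Σ`, `minLeft cs Sg = ^ΣW`,
`relN cs Sg Sg' = N(Σ, Σ')`, `IsLongest cs Sg w` says `w` is a longest element of `W_Σ`,
`longest cs Sg` is the longest element `w₀^Σ`, `relW cs Sg = W̃`,
`complSet cs Sg = Σ^∁`, `tilde cs Sg s = s̃ = w₀^{Σ∪{s}} w₀^Σ`, `relS cs Sg = S̃`,
`relLength cs Sg = ℓ̃ : W → ℕ∞`, and `GoodSubset cs Sg` records the standing
hypotheses (1) and (2) on `Σ`.
-/

namespace RelativeCoxeter

variable {B W : Type*} [Group W] {M : CoxeterMatrix B}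

/-- The set `S` of simple reflections of the Coxeter system. -/
def simpleSet (cs : CoxeterSystem M W) : Set W := Set.range cs.simple

/-- `T(w)`: the set of left inversions of `w`, i.e. reflections `t` with `ℓ(tw) < ℓ(w)`. -/
def invSet (cs : CoxeterSystem M W) (w : W) : Set W :=
  {t | cs.IsReflection t ∧ cs.length (t * w) < cs.length w}

/-- `D(w) = T(w) ∩ S`. -/
def descSet (cs : CoxeterSystem M W) (w : W) : Set W :=
  invSet cs w ∩ simpleSet cs

/-- The standard parabolic subgroup `W_Σ` generated by `Σ`. -/
def par (Sg : Set W) : Subgroup W := Subgroup.closure Sg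

/-- `T_Σ`: the set of reflections of the Coxeter system `(W_Σ, Σ)`. -/
def parRefl (Sg : Set W) : Set W :=
  {t | ∃ u ∈ par Sg, ∃ s ∈ Sg, t = u * s * u⁻¹}

/-- `W^Σ = {w : T(w⁻¹) ∩ T_Σ = ∅}`, minimal-length representatives of `W/W_Σ`. -/
def minRight (cs : CoxeterSystem M W) (Sg : Set W) : Set W :=
  {w | invSet cs w⁻¹ ∩ parRefl Sg = ∅}

/-- `^ΣW = {w : T(w) ∩ T_Σ = ∅}`, minimal-length representatives of `W_Σ\W`. -/
def minLeft (cs : CoxeterSystem M W) (Sg : Set W) : Set W :=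
  {w | invSet cs w ∩ parRefl Sg = ∅}

/-- `N(Σ, Σ') = {y ∈ W^Σ ∩ ^{Σ'}W : y W_Σ y⁻¹ = W_{Σ'}}`. -/
def relN (cs : CoxeterSystem M W) (Sg Sg' : Set W) : Set W :=
  {y | y ∈ minRight cs Sg ∧ y ∈ minLeft cs Sg' ∧
    (fun u => y * u * y⁻¹) '' (par Sg : Set W) = (par Sg' : Set W)}

/-- `w` is a longest element of `W_Σ`. -/
def IsLongest (cs : CoxeterSystem M W) (Sg : Set W) (w : W) : Prop :=
  w ∈ par Sg ∧ ∀ u ∈ par Sg, cs.length u ≤ cs.length w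

/-- The longest element `w₀^Σ` of `W_Σ` (defined when it exists; junk value `1` otherwise). -/
noncomputable def longest (cs : CoxeterSystem M W) (Sg : Set W) : W :=
  letI := Classical.propDecidable (∃ w, IsLongest cs Sg w)
  if h : ∃ w, IsLongest cs Sg w then h.choose else 1

/-- `W̃ = {w : w W_Σ w⁻¹ = W_Σ and T(w) ∩ T_Σ = ∅}`. -/
def relW (cs : CoxeterSystem M W) (Sg : Set W) : Set W :=
  {w | (fun u => w * u * w⁻¹) '' (par Sg : Set W) = (par Sg : Set W) ∧
    invSet cs w ∩ parRefl Sg = ∅}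

/-- `Σ^∁ = {s ∈ S ∖ Σ : W_{Σ∪{s}} is finite}`. -/
def complSet (cs : CoxeterSystem M W) (Sg : Set W) : Set W :=
  {s ∈ simpleSet cs \ Sg | ((par (Sg ∪ {s}) : Set W)).Finite}

/-- `s̃ = w₀^{Σ∪{s}} w₀^Σ`. -/
noncomputable def tilde (cs : CoxeterSystem M W) (Sg : Set W) (s : W) : W :=
  longest cs (Sg ∪ {s}) * longest cs Sg

/-- `S̃ = {s̃ : s ∈ Σ^∁}`. -/
noncomputable def relS (cs : CoxeterSystem M W) (Sg : Set W) : Set W :=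
  {w | ∃ s ∈ complSet cs Sg, w = tilde cs Sg s}

/-- `ℓ̃(w) ∈ ℕ ∪ {∞}`: the minimal `q` such that `w = w₁ ⋯ w_q` with all `w_i ∈ S̃`. -/
noncomputable def relLength (cs : CoxeterSystem M W) (Sg : Set W) (w : W) : ℕ∞ :=
  sInf {q : ℕ∞ | ∃ l : List W, (∀ x ∈ l, x ∈ relS cs Sg) ∧ l.prod = w ∧
    (l.length : ℕ∞) = q}

/-- The standing hypotheses on `Σ`: `Σ ⊆ S`, `W_Σ` is finite, and for every `Σ'` with
`Σ ⊆ Σ' ⊆ S` and `W_{Σ'}` finite, the longest element `w₀^{Σ'}` normalises `W_Σ`. -/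
def GoodSubset (cs : CoxeterSystem M W) (Sg : Set W) : Prop :=
  Sg ⊆ simpleSet cs ∧ ((par Sg : Set W)).Finite ∧
  ∀ Sg' : Set W, Sg ⊆ Sg' → Sg' ⊆ simpleSet cs → ((par Sg' : Set W)).Finite →
    ∀ w0 : W, IsLongest cs Sg' w0 →
      (fun u => w0 * u * w0⁻¹) '' (par Sg : Set W) = (par Sg : Set W)

/-!
Write `w = a d` with `a ∈ W_J`, `J = Σ ∪ {s}`, and `d` without left inversions in `W_J`, so that
`ℓ(u d) = ℓ(u) + ℓ(d)` for every `u ∈ W_J`. If `a = 1`, then `ℓ(s̃ w) = ℓ(s̃) + ℓ(w)` since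
`s̃ ∈ W_J`. Otherwise `a`, like `w`, has no left inversion in `W_Σ`, so `s` is its only simple left
descent in `J`. As `w` normalises `W_Σ`, conjugation by `a⁻¹ = d w⁻¹` maps `W_Σ` onto the standard
parabolic subgroup `W_Q`, `Q = d Σ d⁻¹ ⊆ J` (minimality of `d` forces `ℓ(d σ d⁻¹) = 1`). Every
`σ ∈ Σ` is a left inversion of `w₀^Σ a`, and so is `s`: `w₀^Σ a = a (a⁻¹ w₀^Σ a)` with
`a⁻¹ w₀^Σ a ∈ W_Q` and `a⁻¹ s a ∉ W_Q`. Hence `w₀^Σ a = (w₀^J)⁻¹`, `s̃ w = d`, and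
`ℓ(a) = ℓ(w₀^J) - ℓ(w₀^Σ) = ℓ(s̃) ≠ 0`.

Inversions are controlled by the parity `η(w, t) ∈ ℤ/2` of the number of occurrences of `t` in the
left inversion sequence of a word for `w`. It is well defined because `s ↦ (δ_s, s)` extends to a
homomorphism `W → (W → ℤ/2) ⋊ W`; it satisfies `η(x y, t) = η(x, t) + η(y, x⁻¹ t x)`, and
`η(w, t) = 1` exactly when `t` is a left inversion of `w`. This gives the strong exchange condition
and, through it, reduced words inside standard parabolic subgroups.
-/

variable (cs : CoxeterSystem M W)

theorem sum_range_two_mul_eq_zero {R : Type*} [Semiring R] [CharP R 2] {m : ℕ} {f : ℕ → R}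
    (hf : Function.Periodic f m) : ∑ e ∈ Finset.range (2 * m), f e = 0 := by
  have h : ∀ e, f (m + e) = f e := fun e => by rw [add_comm]; exact hf e
  simp only [two_mul, Finset.sum_range_add, h, CharTwo.add_self_eq_zero]

section ReflectionParity

open scoped Classical

section

attribute [local instance] arrowMulDistribMulAction

noncomputable def conjPrecomp : W →* MulAut (W → Multiplicative (ZMod 2)) :=
  (MulDistribMulAction.toMulAut (ConjAct W) _).comp
    (ConjAct.toConjAct : W ≃* ConjAct W).toMonoidHom

theorem conjPrecomp_apply (g : W) (f : W → Multiplicative (ZMod 2)) (t : W) :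
    conjPrecomp g f t = f (g⁻¹ * t * g) := by
  show f ((ConjAct.toConjAct g)⁻¹ • t) = _
  rw [ConjAct.smul_def]
  simp

end

noncomputable def parityGen (i : B) : (W → Multiplicative (ZMod 2)) ⋊[conjPrecomp] W :=
  ⟨fun t => .ofAdd (if t = cs.simple i then 1 else 0), cs.simple i⟩

theorem toAdd_left_parityGen_mul_pow (i j : B) (n : ℕ) (t : W) :
    Multiplicative.toAdd (((parityGen cs i * parityGen cs j) ^ n).left t) =
      ∑ e ∈ Finset.range (2 * n),
        if t = (cs.simple i * cs.simple j) ^ e * cs.simple i then 1 else 0 := by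
  set p := cs.simple i * cs.simple j
  have hconj : ∀ g u t : W, g⁻¹ * t * g = u ↔ t = g * u * g⁻¹ := fun g u t => by
    constructor <;> rintro rfl <;> group
  have hshift : ∀ e, p * (p ^ e * cs.simple i) * p⁻¹ = p ^ (e + 1 + 1) * cs.simple i := fun e => by
    rw [pow_succ _ (e + 1), pow_succ' _ e]
    simp only [p, mul_inv_rev, cs.inv_simple, mul_assoc]
  induction n generalizing t with
  | zero => simp
  | succ n ih =>
    have hx : Multiplicative.toAdd ((parityGen cs i * parityGen cs j).left t) =
        (if t = p ^ 0 * cs.simple i then 1 else 0) +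
          if t = p ^ (0 + 1) * cs.simple i then 1 else 0 := by
      simp only [parityGen, SemidirectProduct.mul_left, Pi.mul_apply, toAdd_mul, toAdd_ofAdd,
        conjPrecomp_apply, hconj, zero_add, pow_zero, pow_one, one_mul]
      simp only [p, cs.inv_simple, mul_assoc]
    rw [pow_succ', SemidirectProduct.mul_left, Pi.mul_apply, toAdd_mul, conjPrecomp_apply, hx]
    rw [show (parityGen cs i * parityGen cs j).right = p from rfl, ih]
    simp only [hconj, hshift]
    rw [mul_add, mul_one, Finset.sum_range_succ', Finset.sum_range_succ']
    abel

theorem isLiftable_parityGen : M.IsLiftable (parityGen cs) := by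
  intro i j
  have hp : (cs.simple i * cs.simple j) ^ M i j = 1 := cs.simple_mul_simple_pow i j
  refine SemidirectProduct.ext (funext fun t => Multiplicative.toAdd.injective ?_) ?_
  · rw [toAdd_left_parityGen_mul_pow, SemidirectProduct.one_left, Pi.one_apply, toAdd_one]
    exact sum_range_two_mul_eq_zero fun e => by rw [pow_add, hp, mul_one]
  · exact (map_pow SemidirectProduct.rightHom _ _).trans hp

noncomputable def parityHom : W →* (W → Multiplicative (ZMod 2)) ⋊[conjPrecomp] W :=
  cs.lift ⟨parityGen cs, isLiftable_parityGen cs⟩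

noncomputable def reflParity (w t : W) : ZMod 2 :=
  Multiplicative.toAdd ((parityHom cs w).left t)

theorem right_parityHom (w : W) : (parityHom cs w).right = w := by
  have : SemidirectProduct.rightHom.comp (parityHom cs) = MonoidHom.id W :=
    cs.ext_simple fun i => by simp [parityHom, parityGen]
  exact DFunLike.congr_fun this w

theorem reflParity_mul (x y t : W) :
    reflParity cs (x * y) t = reflParity cs x t + reflParity cs y (x⁻¹ * t * x) := by
  simp [reflParity, SemidirectProduct.mul_left, conjPrecomp_apply, right_parityHom]

theorem reflParity_simple (i : B) (t : W) :
    reflParity cs (cs.simple i) t = if t = cs.simple i then 1 else 0 := by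
  simp [reflParity, parityHom, parityGen]

theorem reflParity_one (t : W) : reflParity cs 1 t = 0 := by
  simp [reflParity]

theorem reflParity_inv (x t : W) : reflParity cs x⁻¹ t = reflParity cs x (x * t * x⁻¹) := by
  have h := reflParity_mul cs x x⁻¹ (x * t * x⁻¹)
  rw [mul_inv_cancel, reflParity_one, show x⁻¹ * (x * t * x⁻¹) * x = t by group, eq_comm,
    CharTwo.add_eq_zero] at h
  exact h.symm

theorem reflParity_conj_self (x t : W) :
    reflParity cs (x * t * x⁻¹) (x * t * x⁻¹) = reflParity cs t t := by
  rw [reflParity_mul, show (x * t)⁻¹ * (x * t * x⁻¹) * (x * t) = t by group, reflParity_mul,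
    show x⁻¹ * (x * t * x⁻¹) * x = t by group, reflParity_inv, add_right_comm,
    CharTwo.add_self_eq_zero, zero_add]

theorem reflParity_self {t : W} (ht : cs.IsReflection t) : reflParity cs t t = 1 := by
  obtain ⟨x, i, rfl⟩ := ht
  simp [reflParity_conj_self, reflParity_simple]

theorem reflParity_wordProd (ω : List B) (t : W) :
    reflParity cs (cs.wordProd ω) t = (cs.leftInvSeq ω).count t := by
  induction ω generalizing t with
  | nil => simp [reflParity]
  | cons i ω ih =>
    have hcount : (List.map (MulAut.conj (cs.simple i)) (cs.leftInvSeq ω)).count t =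
        (cs.leftInvSeq ω).count ((cs.simple i)⁻¹ * t * cs.simple i) := by
      conv_lhs => rw [show t = MulAut.conj (cs.simple i) ((cs.simple i)⁻¹ * t * cs.simple i) by
        simp [mul_assoc]]
      exact List.count_map_of_injective _ _ (MulAut.conj _).injective _
    rw [cs.wordProd_cons, reflParity_mul, ih, reflParity_simple, CoxeterSystem.leftInvSeq,
      List.count_cons, hcount]
    split_ifs <;> simp_all [add_comm]

theorem reflParity_eq_one_iff {w t : W} : reflParity cs w t = 1 ↔ cs.IsLeftInversion w t := by
  have of_eq_one : ∀ {w}, reflParity cs w t = 1 → cs.IsLeftInversion w t := fun {w} h => by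
    obtain ⟨ω, hω, rfl⟩ := cs.exists_isReduced w
    refine cs.isLeftInversion_of_mem_leftInvSeq hω (List.count_pos_iff.mp (Nat.pos_of_ne_zero ?_))
    intro h0
    rw [reflParity_wordProd, h0] at h
    exact zero_ne_one h
  refine ⟨of_eq_one, fun h => ?_⟩
  have htw : ¬ cs.IsLeftInversion (t * w) t := fun h' => by
    have := h'.2
    rw [← mul_assoc, h.1.mul_self, one_mul] at this
    exact absurd h.2 (by omega)
  have h0 : reflParity cs (t * w) t = 0 := by
    rcases (by decide : ∀ x : ZMod 2, x = 0 ∨ x = 1) (reflParity cs (t * w) t) with h0 | h1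
    exacts [h0, absurd (of_eq_one h1) htw]
  simpa [← mul_assoc, h.1.mul_self, h.1.inv, reflParity_self cs h.1, h0] using
    reflParity_mul cs t (t * w) t

theorem isLeftInversion_mul_iff {x y t : W} :
    cs.IsLeftInversion (x * y) t ↔
      Xor (cs.IsLeftInversion x t) (cs.IsLeftInversion y (x⁻¹ * t * x)) := by
  simp only [← reflParity_eq_one_iff, reflParity_mul]
  generalize reflParity cs x t = a
  generalize reflParity cs y (x⁻¹ * t * x) = b
  revert a b
  decide

theorem mem_leftInvSeq_of_isLeftInversion {ω : List B} {t : W}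
    (h : cs.IsLeftInversion (cs.wordProd ω) t) : t ∈ cs.leftInvSeq ω := by
  rw [← reflParity_eq_one_iff, reflParity_wordProd] at h
  by_contra hmem
  rw [List.count_eq_zero_of_not_mem hmem, Nat.cast_zero] at h
  exact zero_ne_one h

theorem exists_eraseIdx_of_isLeftInversion {ω : List B} {t : W}
    (h : cs.IsLeftInversion (cs.wordProd ω) t) :
    ∃ j < ω.length, t * cs.wordProd ω = cs.wordProd (ω.eraseIdx j) := by
  obtain ⟨j, hj, rfl⟩ := List.getElem_of_mem (mem_leftInvSeq_of_isLeftInversion cs h)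
  rw [cs.length_leftInvSeq] at hj
  refine ⟨j, hj, ?_⟩
  rw [← cs.getD_leftInvSeq_mul_wordProd ω j, List.getD_eq_getElem]

end ReflectionParity

section Parabolic

variable {P : Set W}

theorem subset_par : P ⊆ par P := Subgroup.subset_closure

theorem par_mono {Q : Set W} (h : P ⊆ Q) : par P ≤ par Q := Subgroup.closure_mono h

theorem isReflection_of_mem_simpleSet {s : W} (hs : s ∈ simpleSet cs) : cs.IsReflection s := by
  obtain ⟨i, rfl⟩ := hs
  exact cs.isReflection_simple i

theorem isLeftInversion_simple_iff {i : B} {t : W} :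
    cs.IsLeftInversion (cs.simple i) t ↔ t = cs.simple i := by
  refine ⟨fun ⟨_, h⟩ => ?_, fun ht => ⟨ht ▸ cs.isReflection_simple i, by simp [ht]⟩⟩
  rwa [cs.length_simple, Nat.lt_one_iff, cs.length_eq_zero_iff, mul_eq_one_iff_eq_inv,
    cs.inv_simple] at h

theorem exists_isReduced_simple_mul {ω : List B} (hω : cs.IsReduced ω)
    (hωP : ∀ j ∈ ω, cs.simple j ∈ P) {i : B} (hi : cs.simple i ∈ P) :
    ∃ ω' : List B, cs.IsReduced ω' ∧ (∀ j ∈ ω', cs.simple j ∈ P) ∧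
      cs.wordProd ω' = cs.simple i * cs.wordProd ω := by
  rcases cs.length_simple_mul (cs.wordProd ω) i with hlen | hlen
  · refine ⟨i :: ω, ?_, List.forall_mem_cons.mpr ⟨hi, hωP⟩, cs.wordProd_cons i ω⟩
    rw [CoxeterSystem.IsReduced, cs.wordProd_cons, hlen, hω.eq, List.length_cons]
  · obtain ⟨j, hj, hexch⟩ :=
      exists_eraseIdx_of_isLeftInversion cs (ω := ω) ⟨cs.isReflection_simple i, by omega⟩
    refine ⟨ω.eraseIdx j, ?_, fun k hk => hωP k (List.mem_of_mem_eraseIdx hk), hexch.symm⟩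
    rw [CoxeterSystem.IsReduced, ← hexch, List.length_eraseIdx_of_lt hj, ← hω.eq]
    omega

theorem exists_isReduced_of_mem_par (hP : P ⊆ simpleSet cs) {x : W} (hx : x ∈ par P) :
    ∃ ω : List B, cs.IsReduced ω ∧ (∀ i ∈ ω, cs.simple i ∈ P) ∧ cs.wordProd ω = x := by
  induction hx using Subgroup.closure_induction_left with
  | one => exact ⟨[], by simp [CoxeterSystem.IsReduced], by simp, cs.wordProd_nil⟩
  | mul_left p hp y _ ih =>
    obtain ⟨i, rfl⟩ := hP hp
    obtain ⟨ω, hω, hωP, rfl⟩ := ih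
    exact exists_isReduced_simple_mul cs hω hωP hp
  | inv_mul_cancel p hp y _ ih =>
    obtain ⟨i, rfl⟩ := hP hp
    obtain ⟨ω, hω, hωP, rfl⟩ := ih
    rw [cs.inv_simple]
    exact exists_isReduced_simple_mul cs hω hωP hp

theorem mem_of_mem_par_of_length_eq_one (hP : P ⊆ simpleSet cs) {x : W} (hx : x ∈ par P)
    (h : cs.length x = 1) : x ∈ P := by
  obtain ⟨ω, hω, hωP, rfl⟩ := exists_isReduced_of_mem_par cs hP hx
  obtain ⟨i, rfl⟩ := List.length_eq_one_iff.mp (hω.eq.symm.trans h)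
  simpa using hωP i (List.mem_singleton_self i)

theorem notMem_par_of_mem_simpleSet (hP : P ⊆ simpleSet cs) {s : W} (hs : s ∈ simpleSet cs)
    (hsP : s ∉ P) : s ∉ par P := by
  obtain ⟨i, rfl⟩ := hs
  exact fun h => hsP (mem_of_mem_par_of_length_eq_one cs hP h (cs.length_simple i))

theorem exists_isLeftDescent_of_mem_par (hP : P ⊆ simpleSet cs) {x : W} (hx : x ∈ par P)
    (hx1 : x ≠ 1) : ∃ i, cs.simple i ∈ P ∧ cs.IsLeftDescent x i := by
  obtain ⟨_ | ⟨i, ω⟩, hω, hωP, rfl⟩ := exists_isReduced_of_mem_par cs hP hx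
  · exact absurd cs.wordProd_nil hx1
  · refine ⟨i, hωP i List.mem_cons_self, ?_⟩
    have := cs.length_wordProd_le ω
    rw [CoxeterSystem.IsLeftDescent, hω.eq, cs.wordProd_cons, cs.simple_mul_simple_cancel_left,
      List.length_cons]
    omega

theorem par_induction_left (hP : P ⊆ simpleSet cs) {p : W → Prop} (one : p 1)
    (mul_simple : ∀ i y, cs.simple i ∈ P → y ∈ par P →
      cs.length (cs.simple i * y) = cs.length y + 1 → p y → p (cs.simple i * y))
    {y : W} (hy : y ∈ par P) : p y := by
  induction hn : cs.length y using Nat.strong_induction_on generalizing y with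
  | _ n ih =>
  obtain rfl | hy1 := eq_or_ne y 1
  · exact one
  obtain ⟨i, hi, hdesc⟩ := exists_isLeftDescent_of_mem_par cs hP hy hy1
  have hiy : cs.simple i * y ∈ par P := mul_mem (subset_par hi) hy
  have hlen : cs.length (cs.simple i * (cs.simple i * y)) = cs.length (cs.simple i * y) + 1 := by
    rw [cs.simple_mul_simple_cancel_left]
    have := cs.length_simple_mul y i
    unfold CoxeterSystem.IsLeftDescent at hdesc
    omega
  have key := mul_simple i _ hi hiy hlen (ih _ (hn ▸ hdesc) hiy rfl)
  rwa [cs.simple_mul_simple_cancel_left] at key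

theorem conj_mem_parRefl {g t : W} (hg : g ∈ par P) (ht : t ∈ parRefl P) :
    g * t * g⁻¹ ∈ parRefl P := by
  obtain ⟨u, hu, s, hs, rfl⟩ := ht
  exact ⟨g * u, mul_mem hg hu, s, hs, by group⟩

theorem parRefl_subset_par : parRefl P ⊆ par P := by
  rintro _ ⟨u, hu, s, hs, rfl⟩
  exact mul_mem (mul_mem hu (subset_par hs)) (inv_mem hu)

theorem mem_parRefl_of_isLeftInversion (hP : P ⊆ simpleSet cs) {x t : W} (hx : x ∈ par P)
    (h : cs.IsLeftInversion x t) : t ∈ parRefl P := by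
  have step : ∀ i y t, cs.simple i ∈ P → (∀ t, cs.IsLeftInversion y t → t ∈ parRefl P) →
      cs.IsLeftInversion (cs.simple i * y) t → t ∈ parRefl P := by
    intro i y t hi ih h
    rcases (isLeftInversion_mul_iff cs).mp h with ⟨h, -⟩ | ⟨h, -⟩
    · rw [(isLeftInversion_simple_iff cs).mp h]
      exact ⟨1, one_mem _, _, hi, by group⟩
    · simpa [mul_assoc] using conj_mem_parRefl (subset_par hi) (ih _ h)
  induction hx using Subgroup.closure_induction_left generalizing t with
  | one => exact absurd h.2 (by simp)
  | mul_left p hp y _ ih =>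
    obtain ⟨i, rfl⟩ := hP hp
    exact step i y t hp (fun _ h => ih h) h
  | inv_mul_cancel p hp y _ ih =>
    obtain ⟨i, rfl⟩ := hP hp
    rw [cs.inv_simple] at h
    exact step i y t hp (fun _ h => ih h) h

theorem mem_parRefl_of_isReflection (hP : P ⊆ simpleSet cs) {t : W} (ht : cs.IsReflection t)
    (htP : t ∈ par P) : t ∈ parRefl P :=
  mem_parRefl_of_isLeftInversion cs hP htP ⟨ht, by simpa [ht.mul_self] using ht.odd_length.pos⟩

theorem length_mul_of_forall_not_isLeftInversion (hP : P ⊆ simpleSet cs) {d : W}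
    (hd : ∀ t ∈ par P, ¬ cs.IsLeftInversion d t) {u : W} (hu : u ∈ par P) :
    cs.length (u * d) = cs.length u + cs.length d := by
  refine par_induction_left cs hP (p := fun u => cs.length (u * d) = cs.length u + cs.length d)
    (by simp) (fun i y hi hy hlen ih => ?_) hu
  have hconj : y⁻¹ * cs.simple i * y ∈ par P := mul_mem (mul_mem (inv_mem hy) (subset_par hi)) hy
  have hinv : ¬ cs.IsLeftInversion (y * d) (cs.simple i) := by
    rw [isLeftInversion_mul_iff]
    rintro (⟨h, -⟩ | ⟨h, -⟩)
    · exact absurd h.2 (by omega)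
    · exact hd _ hconj h
  have := cs.length_simple_mul (y * d) i
  have : ¬ cs.length (cs.simple i * (y * d)) < cs.length (y * d) :=
    fun h => hinv ⟨cs.isReflection_simple i, h⟩
  simp only [mul_assoc] at *
  omega

theorem exists_mul_forall_not_isLeftInversion (P : Set W) (w : W) :
    ∃ a ∈ par P, ∃ d, w = a * d ∧ ∀ t ∈ par P, ¬ cs.IsLeftInversion d t := by
  classical
  have hex : ∃ n, ∃ a ∈ par P, cs.length (a⁻¹ * w) = n := ⟨_, 1, one_mem _, rfl⟩
  obtain ⟨a, ha, hmin⟩ := Nat.find_spec hex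
  refine ⟨a, ha, a⁻¹ * w, by group, fun t ht hinv => ?_⟩
  have := Nat.find_min' hex ⟨a * t⁻¹, mul_mem ha (inv_mem ht), rfl⟩
  rw [mul_inv_rev, inv_inv, mul_assoc] at this
  exact absurd hinv.2 (by omega)

theorem isLeftInversion_mul_iff_of_forall_not_isLeftInversion (hP : P ⊆ simpleSet cs)
    {a d t : W} (hd : ∀ t ∈ par P, ¬ cs.IsLeftInversion d t) (ha : a ∈ par P)
    (ht : t ∈ par P) : cs.IsLeftInversion (a * d) t ↔ cs.IsLeftInversion a t := by
  unfold CoxeterSystem.IsLeftInversion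
  rw [← mul_assoc, length_mul_of_forall_not_isLeftInversion cs hP hd (mul_mem ht ha),
    length_mul_of_forall_not_isLeftInversion cs hP hd ha, Nat.add_lt_add_iff_right]

theorem conj_mem_of_forall_not_isLeftInversion (hP : P ⊆ simpleSet cs) {d σ : W}
    (hd : ∀ t ∈ par P, ¬ cs.IsLeftInversion d t) (hσ : σ ∈ simpleSet cs)
    (h : d * σ * d⁻¹ ∈ par P) : d * σ * d⁻¹ ∈ P := by
  obtain ⟨i, rfl⟩ := hσ
  refine mem_of_mem_par_of_length_eq_one cs hP h ?_
  have hadd := length_mul_of_forall_not_isLeftInversion cs hP hd h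
  rw [inv_mul_cancel_right] at hadd
  have hne : cs.length (d * cs.simple i * d⁻¹) ≠ 0 := by
    rw [Ne, cs.length_eq_zero_iff, conj_eq_one_iff]
    intro h1
    simpa [h1] using cs.length_simple i
  rcases cs.length_mul_simple d i with h | h <;> omega

end Parabolic

section Longest

variable {P : Set W} {x₀ : W}

theorem isLongest_longest (hfin : (par P : Set W).Finite) : IsLongest cs P (longest cs P) := by
  have hex : ∃ w, IsLongest cs P w := by
    obtain ⟨x, hx, hmax⟩ := Set.exists_max_image _ cs.length hfin ⟨1, one_mem _⟩
    exact ⟨x, hx, hmax⟩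
  unfold longest
  rw [dif_pos hex]
  exact hex.choose_spec

variable {cs}

theorem IsLongest.inv (h : IsLongest cs P x₀) : IsLongest cs P x₀⁻¹ :=
  ⟨inv_mem h.1, fun u hu => (cs.length_inv x₀).symm ▸ h.2 u hu⟩

theorem IsLongest.isLeftInversion (h : IsLongest cs P x₀) {t : W} (ht : cs.IsReflection t)
    (htP : t ∈ par P) : cs.IsLeftInversion x₀ t :=
  ⟨ht, lt_of_le_of_ne (h.2 _ (mul_mem htP h.1)) (ht.length_mul_right_ne x₀)⟩

theorem IsLongest.length_mul_add_length (hP : P ⊆ simpleSet cs) (h : IsLongest cs P x₀) {y : W}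
    (hy : y ∈ par P) : cs.length (y * x₀) + cs.length y = cs.length x₀ := by
  refine par_induction_left cs hP (p := fun y => cs.length (y * x₀) + cs.length y = cs.length x₀)
    (by simp) (fun i y hi hy hlen ih => ?_) hy
  have hinv : cs.IsLeftInversion (y * x₀) (cs.simple i) := by
    refine (isLeftInversion_mul_iff cs).mpr (Or.inr ⟨h.isLeftInversion ?_ ?_, fun h => ?_⟩)
    · simpa using (cs.isReflection_simple i).conj y⁻¹
    · exact mul_mem (mul_mem (inv_mem hy) (subset_par hi)) hy
    · exact absurd h.2 (by omega)
  have := cs.length_simple_mul (y * x₀) i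
  have := hinv.2
  simp only [mul_assoc] at *
  omega

theorem IsLongest.length_mul_add_length' (hP : P ⊆ simpleSet cs) (h : IsLongest cs P x₀) {y : W}
    (hy : y ∈ par P) : cs.length (x₀ * y) + cs.length y = cs.length x₀ := by
  simpa [← cs.length_inv (x₀ * y)] using h.inv.length_mul_add_length hP (inv_mem hy)

theorem IsLongest.eq_of_forall_isLeftDescent (hP : P ⊆ simpleSet cs) (h : IsLongest cs P x₀)
    {x : W} (hx : x ∈ par P) (hdesc : ∀ i, cs.simple i ∈ P → cs.IsLeftDescent x i) : x = x₀ := by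
  have hy : x * x₀⁻¹ ∈ par P := mul_mem hx (inv_mem h.1)
  by_contra hne
  obtain ⟨i, hi, hydesc⟩ :=
    exists_isLeftDescent_of_mem_par cs hP hy (mt mul_inv_eq_one.mp hne)
  have h1 := h.length_mul_add_length hP hy
  have h2 := h.length_mul_add_length hP (mul_mem (subset_par hi) hy)
  have h3 := hdesc i hi
  simp only [mul_assoc, inv_mul_cancel, mul_one, CoxeterSystem.IsLeftDescent] at *
  omega

end Longest

section Tilde

variable {Sg : Set W}

theorem mem_normalizer_of_mem_relW {w : W} (hw : w ∈ relW cs Sg) :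
    w ∈ Subgroup.normalizer (par Sg) :=
  Subgroup.mem_normalizer_iff_map_conj_eq.mpr
    (SetLike.coe_injective (by rw [Subgroup.coe_map]; exact hw.1))

theorem not_isLeftInversion_of_mem_relW (hSg : Sg ⊆ simpleSet cs) {w t : W}
    (hw : w ∈ relW cs Sg) (ht : t ∈ par Sg) : ¬ cs.IsLeftInversion w t := fun h =>
  Set.eq_empty_iff_forall_notMem.mp hw.2 t ⟨h, mem_parRefl_of_isReflection cs hSg h.1 ht⟩

theorem isLeftInversion_of_mem_par_union (hSg : Sg ⊆ simpleSet cs) {s₀ a : W}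
    (hs₀ : s₀ ∈ simpleSet cs) (ha : a ∈ par (Sg ∪ {s₀})) (ha1 : a ≠ 1)
    (haSg : ∀ t ∈ par Sg, ¬ cs.IsLeftInversion a t) : cs.IsLeftInversion a s₀ := by
  obtain ⟨i, hi | hi, hdesc⟩ := exists_isLeftDescent_of_mem_par cs
    (Set.union_subset hSg (Set.singleton_subset_iff.mpr hs₀)) ha ha1
  · exact absurd ((cs.isLeftInversion_simple_iff_isLeftDescent a i).mpr hdesc)
      (haSg _ (subset_par hi))
  · rw [← Set.mem_singleton_iff.mp hi]
    exact (cs.isLeftInversion_simple_iff_isLeftDescent a i).mpr hdesc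

theorem exists_conj_mem_par_iff {J : Set W} {a d : W} (hJ : J ⊆ simpleSet cs) (hSgJ : Sg ⊆ J)
    (hN : a * d ∈ Subgroup.normalizer (par Sg)) (ha : a ∈ par J)
    (hd : ∀ t ∈ par J, ¬ cs.IsLeftInversion d t) :
    ∃ Q ⊆ simpleSet cs, ∀ u, a⁻¹ * u * a ∈ par Q ↔ u ∈ par Sg := by
  refine ⟨MulAut.conj d '' Sg, ?_, fun u => ?_⟩
  · rintro _ ⟨σ, hσ, rfl⟩
    refine hJ (conj_mem_of_forall_not_isLeftInversion cs hJ hd (hJ (hSgJ hσ)) ?_)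
    have hσN := (Subgroup.mem_normalizer_iff.mp hN σ).mp (subset_par hσ)
    convert mul_mem (mul_mem (inv_mem ha) (par_mono hSgJ hσN)) ha using 1
    group
  · have hmap : par (MulAut.conj d '' Sg) = (par Sg).map (MulAut.conj d).toMonoidHom :=
      by rw [par, par, MonoidHom.map_closure, MulEquiv.coe_toMonoidHom]
    rw [hmap, Subgroup.mem_map, Subgroup.mem_normalizer_iff''.mp hN u]
    constructor
    · rintro ⟨y, hy, hyu⟩
      convert hy using 1
      simp only [MulEquiv.coe_toMonoidHom, MulAut.conj_apply] at hyu
      rw [show (a * d)⁻¹ * u * (a * d) = d⁻¹ * (a⁻¹ * u * a) * d by group, ← hyu]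
      group
    · exact fun h => ⟨_, h, by simp only [MulEquiv.coe_toMonoidHom, MulAut.conj_apply]; group⟩

theorem forall_not_isLeftInversion_of_mul_mem_relW {J : Set W} {a d : W}
    (hSg : Sg ⊆ simpleSet cs) (hJ : J ⊆ simpleSet cs) (hSgJ : Sg ⊆ J) (hw : a * d ∈ relW cs Sg)
    (ha : a ∈ par J) (hd : ∀ t ∈ par J, ¬ cs.IsLeftInversion d t) :
    ∀ t ∈ par Sg, ¬ cs.IsLeftInversion a t := fun _ ht h =>
  not_isLeftInversion_of_mem_relW cs hSg hw ht
    ((isLeftInversion_mul_iff_of_forall_not_isLeftInversion cs hJ hd ha (par_mono hSgJ ht)).mpr h)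

theorem mul_eq_inv_of_isLongest {s₀ v w₀ a d : W} (hSg : Sg ⊆ simpleSet cs)
    (hs₀ : s₀ ∈ simpleSet cs) (hs₀Sg : s₀ ∉ par Sg) (hv : IsLongest cs Sg v)
    (hw₀ : IsLongest cs (Sg ∪ {s₀}) w₀) (hN : a * d ∈ Subgroup.normalizer (par Sg))
    (ha : a ∈ par (Sg ∪ {s₀})) (ha1 : a ≠ 1) (haSg : ∀ t ∈ par Sg, ¬ cs.IsLeftInversion a t)
    (hd : ∀ t ∈ par (Sg ∪ {s₀}), ¬ cs.IsLeftInversion d t) : v * a = w₀⁻¹ := by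
  have hJ : Sg ∪ {s₀} ⊆ simpleSet cs := Set.union_subset hSg (Set.singleton_subset_iff.mpr hs₀)
  obtain ⟨Q, hQ, hconj⟩ := exists_conj_mem_par_iff cs hJ Set.subset_union_left hN ha hd
  refine hw₀.inv.eq_of_forall_isLeftDescent hJ
    (mul_mem (par_mono Set.subset_union_left hv.1) ha) fun i hi => ?_
  rw [← cs.isLeftInversion_simple_iff_isLeftDescent]
  rcases hi with hi | hi
  · refine (isLeftInversion_mul_iff cs).mpr
      (Or.inl ⟨hv.isLeftInversion (cs.isReflection_simple i) (subset_par hi), haSg _ ?_⟩)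
    exact mul_mem (mul_mem (inv_mem hv.1) (subset_par hi)) hv.1
  · rw [Set.mem_singleton_iff.mp hi, show v * a = a * (a⁻¹ * v * a) by group]
    refine (isLeftInversion_mul_iff cs).mpr
      (Or.inl ⟨isLeftInversion_of_mem_par_union cs hSg hs₀ ha ha1 haSg, fun h => hs₀Sg ?_⟩)
    exact (hconj s₀).mp
      (parRefl_subset_par (mem_parRefl_of_isLeftInversion cs hQ ((hconj v).mpr hv.1) h))

theorem longest_mul_longest_ne_one {s₀ v w₀ : W} (hSg : Sg ⊆ simpleSet cs)
    (hs₀ : s₀ ∈ simpleSet cs) (hs₀Sg : s₀ ∉ par Sg) (hv : IsLongest cs Sg v)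
    (hw₀ : IsLongest cs (Sg ∪ {s₀}) w₀) : w₀ * v ≠ 1 := by
  rw [Ne, mul_eq_one_iff_eq_inv]
  intro h
  refine hs₀Sg (parRefl_subset_par (mem_parRefl_of_isLeftInversion cs hSg (h ▸ inv_mem hv.1) ?_))
  exact hw₀.isLeftInversion (isReflection_of_mem_simpleSet cs hs₀) (subset_par (Or.inr rfl))

end Tilde

/-- for `w ∈ W̃` and `s̃ ∈ S̃`, exactly one of
`ℓ(s̃w) = ℓ(w) + ℓ(s̃)` and `ℓ(s̃w) = ℓ(w) − ℓ(s̃)` holds. -/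
theorem length_tilde_mul_dichotomy (Sg : Set W) (hSg : GoodSubset cs Sg)
    (w s : W) (hw : w ∈ relW cs Sg) (hs : s ∈ relS cs Sg) :
    Xor' (cs.length (s * w) = cs.length w + cs.length s)
      (cs.length (s * w) + cs.length s = cs.length w) := by
  obtain ⟨hSgS, hSgfin, -⟩ := hSg
  obtain ⟨s₀, ⟨⟨hs₀S, hs₀Sg⟩, hJfin⟩, rfl⟩ := hs
  have hJS : Sg ∪ {s₀} ⊆ simpleSet cs := Set.union_subset hSgS (Set.singleton_subset_iff.mpr hs₀S)
  have hSgJ : par Sg ≤ par (Sg ∪ {s₀}) := par_mono Set.subset_union_left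
  have hv := isLongest_longest cs hSgfin
  have hw₀ := isLongest_longest cs hJfin
  have hs₀ := notMem_par_of_mem_simpleSet cs hSgS hs₀S hs₀Sg
  have hlen := hw₀.length_mul_add_length' hJS (hSgJ hv.1)
  have hpos := mt cs.length_eq_zero_iff.mp (longest_mul_longest_ne_one cs hSgS hs₀S hs₀ hv hw₀)
  unfold tilde
  obtain ⟨a, ha, d, rfl, hd⟩ := exists_mul_forall_not_isLeftInversion cs (Sg ∪ {s₀}) w
  have hlen_w := length_mul_of_forall_not_isLeftInversion cs hJS hd ha
  obtain rfl | ha1 := eq_or_ne a 1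
  · have hlen_sw := length_mul_of_forall_not_isLeftInversion cs hJS hd (mul_mem hw₀.1 (hSgJ hv.1))
    rw [one_mul] at hlen_w ⊢
    exact Or.inl ⟨by omega, by omega⟩
  have haSg := forall_not_isLeftInversion_of_mul_mem_relW cs hSgS hJS Set.subset_union_left hw ha hd
  have hva := mul_eq_inv_of_isLongest cs hSgS hs₀S hs₀ hv hw₀ (mem_normalizer_of_mem_relW cs hw)
    ha ha1 haSg hd
  have hlen_va := length_mul_of_forall_not_isLeftInversion cs hSgS haSg hv.1
  rw [hva, cs.length_inv] at hlen_va
  rw [mul_assoc, ← mul_assoc (longest cs Sg), hva, mul_inv_cancel_left]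
  exact Or.inr ⟨by omega, by omega⟩

end RelativeCoxeter
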